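/- (Conserved quadratic form for the vector NLS Lax pair, first part of Proposition 5.1.) Let m ≥ 1, let Σ ∈ M_{m×m}(ℝ) be a constant diagonal matrix with diagonal entries ±1, let μ ∈ ℝ, and let q : ℝ × ℝ → ℂ^m (a row vector) be smooth. Suppose the scalar function φ : ℝ × ℝ → ℂ and the column-vector function ψ : ℝ × ℝ → ℂ^m satisfy the Lax pair: φ_x = −iμ φ + q ψ, ψ_x = Σ q† φ + iμ ψ, φ_t = (−2iμ² − i q Σ q†) φ + (2μ q + i q_x) ψ, ψ_t = (2μ Σ q† − i Σ q_x†) φ + (2iμ² I_m + i Σ q† q) ψ. Then the real-valued quantity |φ|² − ψ† Σ ψ is independent of x and t: ∂_x(|φ|² − ψ†Σψ) = 0 and ∂_t(|φ|² − ψ†Σψ) = 0. -/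

import Mathlib

open Complex

noncomputable section

/-- Spatial partial derivative of a scalar complex field. -/
def pdxS (f : ℝ → ℝ → ℂ) : ℝ → ℝ → ℂ := fun x t => deriv (fun x' => f x' t) x

/-- Temporal partial derivative of a scalar complex field. -/
def pdtS (f : ℝ → ℝ → ℂ) : ℝ → ℝ → ℂ := fun x t => deriv (fun t' => f x t') t

/-- Spatial partial derivative of a vector-valued complex field (componentwise). -/
def pdxV {m : ℕ} (f : ℝ → ℝ → Fin m → ℂ) : ℝ → ℝ → Fin m → ℂ :=
  fun x t j => deriv (fun x' => f x' t j) x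

/-- Temporal partial derivative of a vector-valued complex field (componentwise). -/
def pdtV {m : ℕ} (f : ℝ → ℝ → Fin m → ℂ) : ℝ → ℝ → Fin m → ℂ :=
  fun x t j => deriv (fun t' => f x t' j) t

/-- The Lax pair of the vector NLS equation at a real spectral parameter `μ`:
`φ_x = -iμφ + qψ`, `ψ_x = Σq†φ + iμψ`,
`φ_t = (-2iμ² - iqΣq†)φ + (2μq + iq_x)ψ`,
`ψ_t = (2μΣq† - iΣq_x†)φ + (2iμ² I + iΣq†q)ψ`,
written componentwise for the row vector `q`, the scalar `φ`
and the column vector `ψ`. -/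
def VectorLaxPair {m : ℕ} (σ : Fin m → ℝ) (μ : ℝ)
    (q : ℝ → ℝ → Fin m → ℂ) (φ : ℝ → ℝ → ℂ) (ψ : ℝ → ℝ → Fin m → ℂ) : Prop :=
  (∀ x t : ℝ, pdxS φ x t
      = -Complex.I * (μ : ℂ) * φ x t + ∑ k, q x t k * ψ x t k) ∧
  (∀ x t : ℝ, ∀ j, pdxV ψ x t j
      = (σ j : ℂ) * (starRingEnd ℂ) (q x t j) * φ x t
        + Complex.I * (μ : ℂ) * ψ x t j) ∧
  (∀ x t : ℝ, pdtS φ x t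
      = (-2 * Complex.I * (μ : ℂ) ^ 2
          - Complex.I * ∑ k, (σ k : ℂ) * (q x t k * (starRingEnd ℂ) (q x t k))) * φ x t
        + ∑ k, (2 * (μ : ℂ) * q x t k + Complex.I * pdxV q x t k) * ψ x t k) ∧
  (∀ x t : ℝ, ∀ j, pdtV ψ x t j
      = (2 * (μ : ℂ) * (σ j : ℂ) * (starRingEnd ℂ) (q x t j)
          - Complex.I * (σ j : ℂ) * (starRingEnd ℂ) (pdxV q x t j)) * φ x t
        + 2 * Complex.I * (μ : ℂ) ^ 2 * ψ x t j
        + Complex.I * (σ j : ℂ) * (starRingEnd ℂ) (q x t j)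
            * ∑ k, q x t k * ψ x t k)

/-- Derivative of `normSq ∘ f` for a complex-valued function of a real variable. -/
lemma hasDerivAt_normSq_comp {f : ℝ → ℂ} {f' : ℂ} {x : ℝ} (hf : HasDerivAt f f' x) :
    HasDerivAt (fun y => (Complex.normSq (f y) : ℝ))
      (f' * (starRingEnd ℂ) (f x) + f x * (starRingEnd ℂ) f').re x := by
  have hmul : HasDerivAt (fun y => f y * (starRingEnd ℂ) (f y))
      (f' * (starRingEnd ℂ) (f x) + f x * (starRingEnd ℂ) f') x := hf.mul hf.star
  have := (Complex.reCLM.hasFDerivAt.comp_hasDerivAt x hmul)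
  simpa [Complex.mul_conj, Function.comp_def, Complex.reCLM_apply] using this

/-- The algebraic identity underlying conservation in `x`. -/
lemma vlax_alg_x {m : ℕ} (σ : Fin m → ℝ) (hσ2 : ∀ j, (σ j:ℂ)*(σ j:ℂ)=1) (μ : ℝ)
    (a : ℂ) (c b : Fin m → ℂ) :
    ((-I*(μ:ℂ)*a + ∑ k, c k * b k) * (starRingEnd ℂ) a
      + a * (starRingEnd ℂ) (-I*(μ:ℂ)*a + ∑ k, c k * b k))
    - ∑ j, (σ j:ℂ) * (((σ j:ℂ) * (starRingEnd ℂ) (c j) * a + I*(μ:ℂ)*b j) * (starRingEnd ℂ) (b j)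
        + b j * (starRingEnd ℂ) ((σ j:ℂ) * (starRingEnd ℂ) (c j) * a + I*(μ:ℂ)*b j)) = 0 := by
  have hsum : ∑ j, (σ j:ℂ) * (((σ j:ℂ) * (starRingEnd ℂ) (c j) * a + I*(μ:ℂ)*b j) * (starRingEnd ℂ) (b j)
      + b j * (starRingEnd ℂ) ((σ j:ℂ) * (starRingEnd ℂ) (c j) * a + I*(μ:ℂ)*b j))
      = a * (∑ k, (starRingEnd ℂ) (c k) * (starRingEnd ℂ) (b k))
        + (starRingEnd ℂ) a * (∑ k, c k * b k) := by
    rw [Finset.mul_sum, Finset.mul_sum, ← Finset.sum_add_distrib]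
    refine Finset.sum_congr rfl fun j _ => ?_
    simp only [map_add, map_mul, Complex.conj_I, Complex.conj_ofReal, Complex.conj_conj]
    linear_combination ((starRingEnd ℂ) (c j) * a * (starRingEnd ℂ) (b j)
      + c j * (starRingEnd ℂ) a * b j) * hσ2 j
  rw [hsum]
  simp only [map_add, map_mul, map_neg, map_sum, Complex.conj_I, Complex.conj_ofReal]
  ring

/-- The algebraic identity underlying conservation in `t`. -/
lemma vlax_alg_t {m : ℕ} (σ : Fin m → ℝ) (hσ2 : ∀ j, (σ j:ℂ)*(σ j:ℂ)=1) (μ : ℝ)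
    (a : ℂ) (c d b : Fin m → ℂ) :
    (((-2*I*(μ:ℂ)^2 - I*∑ k, (σ k:ℂ)*(c k * (starRingEnd ℂ) (c k)))*a
        + ∑ k, (2*(μ:ℂ)*c k + I*d k)*b k) * (starRingEnd ℂ) a
      + a * (starRingEnd ℂ) ((-2*I*(μ:ℂ)^2 - I*∑ k, (σ k:ℂ)*(c k * (starRingEnd ℂ) (c k)))*a
        + ∑ k, (2*(μ:ℂ)*c k + I*d k)*b k))
    - ∑ j, (σ j:ℂ) *
        (((2*(μ:ℂ)*(σ j:ℂ)*(starRingEnd ℂ) (c j) - I*(σ j:ℂ)*(starRingEnd ℂ) (d j))*a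
            + 2*I*(μ:ℂ)^2*b j + I*(σ j:ℂ)*(starRingEnd ℂ) (c j) * ∑ k, c k * b k)
          * (starRingEnd ℂ) (b j)
         + b j * (starRingEnd ℂ) ((2*(μ:ℂ)*(σ j:ℂ)*(starRingEnd ℂ) (c j)
            - I*(σ j:ℂ)*(starRingEnd ℂ) (d j))*a
            + 2*I*(μ:ℂ)^2*b j + I*(σ j:ℂ)*(starRingEnd ℂ) (c j) * ∑ k, c k * b k)) = 0 := by
  set S := ∑ k, c k * b k with hS
  set T := ∑ k, (starRingEnd ℂ) (c k) * (starRingEnd ℂ) (b k) with hT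
  set U := ∑ k, d k * b k with hU
  set V := ∑ k, (starRingEnd ℂ) (d k) * (starRingEnd ℂ) (b k) with hV
  have hST : (starRingEnd ℂ) S = T := by
    rw [hS, map_sum]; exact Finset.sum_congr rfl fun k _ => by rw [map_mul]
  have hqq : (starRingEnd ℂ) (∑ k, (σ k:ℂ)*(c k * (starRingEnd ℂ) (c k)))
      = ∑ k, (σ k:ℂ)*(c k * (starRingEnd ℂ) (c k)) := by
    rw [map_sum]
    refine Finset.sum_congr rfl fun k _ => ?_
    simp only [map_mul, Complex.conj_ofReal, Complex.conj_conj]; ring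
  have hSd : ∑ k, (2*(μ:ℂ)*c k + I*d k)*b k = 2*(μ:ℂ)*S + I*U := by
    rw [hS, hU, Finset.mul_sum, Finset.mul_sum, ← Finset.sum_add_distrib]
    exact Finset.sum_congr rfl fun k _ => by ring
  have hSd' : (starRingEnd ℂ) (∑ k, (2*(μ:ℂ)*c k + I*d k)*b k) = 2*(μ:ℂ)*T - I*V := by
    rw [map_sum, hT, hV, Finset.mul_sum, Finset.mul_sum, ← Finset.sum_sub_distrib]
    refine Finset.sum_congr rfl fun k _ => ?_
    simp only [map_add, map_mul, Complex.conj_I, Complex.conj_ofReal, map_ofNat]; ring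
  have hsum : ∑ j, (σ j:ℂ) *
      (((2*(μ:ℂ)*(σ j:ℂ)*(starRingEnd ℂ) (c j) - I*(σ j:ℂ)*(starRingEnd ℂ) (d j))*a
          + 2*I*(μ:ℂ)^2*b j + I*(σ j:ℂ)*(starRingEnd ℂ) (c j) * S)
        * (starRingEnd ℂ) (b j)
       + b j * (starRingEnd ℂ) ((2*(μ:ℂ)*(σ j:ℂ)*(starRingEnd ℂ) (c j)
          - I*(σ j:ℂ)*(starRingEnd ℂ) (d j))*a
          + 2*I*(μ:ℂ)^2*b j + I*(σ j:ℂ)*(starRingEnd ℂ) (c j) * S))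
      = 2*(μ:ℂ)*a*T - I*a*V + 2*(μ:ℂ)*(starRingEnd ℂ) a*S + I*(starRingEnd ℂ) a*U := by
    have key : ∀ j, (σ j:ℂ) *
      (((2*(μ:ℂ)*(σ j:ℂ)*(starRingEnd ℂ) (c j) - I*(σ j:ℂ)*(starRingEnd ℂ) (d j))*a
          + 2*I*(μ:ℂ)^2*b j + I*(σ j:ℂ)*(starRingEnd ℂ) (c j) * S)
        * (starRingEnd ℂ) (b j)
       + b j * (starRingEnd ℂ) ((2*(μ:ℂ)*(σ j:ℂ)*(starRingEnd ℂ) (c j)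
          - I*(σ j:ℂ)*(starRingEnd ℂ) (d j))*a
          + 2*I*(μ:ℂ)^2*b j + I*(σ j:ℂ)*(starRingEnd ℂ) (c j) * S))
      = (2*(μ:ℂ)*a)*((starRingEnd ℂ) (c j)*(starRingEnd ℂ) (b j))
        + (-(I)*a)*((starRingEnd ℂ) (d j)*(starRingEnd ℂ) (b j))
        + (2*(μ:ℂ)*(starRingEnd ℂ) a)*(c j*b j)
        + (I*(starRingEnd ℂ) a)*(d j*b j)
        + (I*S)*((starRingEnd ℂ) (c j)*(starRingEnd ℂ) (b j))
        + (-(I)*(starRingEnd ℂ) S)*(c j*b j) := by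
      intro j
      simp only [map_add, map_sub, map_mul, map_pow, map_ofNat, Complex.conj_I,
        Complex.conj_ofReal, Complex.conj_conj]
      linear_combination ((2*(μ:ℂ)*(starRingEnd ℂ) (c j)*a*(starRingEnd ℂ) (b j))
        - I*(starRingEnd ℂ) (d j)*a*(starRingEnd ℂ) (b j)
        + I*(starRingEnd ℂ) (c j)*S*(starRingEnd ℂ) (b j)
        + 2*(μ:ℂ)*(c j)*(starRingEnd ℂ) a*(b j)
        + I*(d j)*(starRingEnd ℂ) a*(b j)
        - I*(c j)*(starRingEnd ℂ) S*(b j)) * hσ2 j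
    rw [Finset.sum_congr rfl fun j _ => key j]
    simp only [Finset.sum_add_distrib, ← Finset.mul_sum]
    rw [hST, ← hS, ← hT, ← hU, ← hV]
    ring
  rw [hsum, map_add, map_mul, hSd', hSd]
  simp only [map_sub, map_mul, map_neg, map_pow, map_ofNat, Complex.conj_I,
    Complex.conj_ofReal, hqq]
  ring

/-- conserved quadratic form for the vector NLS Lax pair: for a solution
`(φ,ψ)` of the vector NLS Lax pair at real `μ`, the quantity `|φ|² - ψ†Σψ` is
independent of `x` and `t`. -/
theorem vector_lax_conserved_quadratic_form {m : ℕ} (hm : 1 ≤ m)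
    (σ : Fin m → ℝ) (hσ : ∀ j, σ j = 1 ∨ σ j = -1) (μ : ℝ)
    (q : ℝ → ℝ → Fin m → ℂ)
    (hq : ∀ k, ContDiff ℝ (⊤ : ℕ∞) (fun p : ℝ × ℝ => q p.1 p.2 k))
    (φ : ℝ → ℝ → ℂ) (hφ : ContDiff ℝ (⊤ : ℕ∞) (fun p : ℝ × ℝ => φ p.1 p.2))
    (ψ : ℝ → ℝ → Fin m → ℂ)
    (hψ : ∀ j, ContDiff ℝ (⊤ : ℕ∞) (fun p : ℝ × ℝ => ψ p.1 p.2 j))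
    (hlax : VectorLaxPair σ μ q φ ψ) :
    (∀ x t : ℝ, deriv (fun x' =>
        Complex.normSq (φ x' t) - ∑ j, σ j * Complex.normSq (ψ x' t j)) x = 0) ∧
    (∀ x t : ℝ, deriv (fun t' =>
        Complex.normSq (φ x t') - ∑ j, σ j * Complex.normSq (ψ x t' j)) t = 0) := by
  obtain ⟨hlx, hlψx, hlt, hlψt⟩ := hlax
  have hσ2 : ∀ j, (σ j:ℂ)*(σ j:ℂ) = 1 := by
    intro j; rcases hσ j with h | h <;> rw [h] <;> norm_num
  have hre : ∀ (w : ℂ) (B : Fin m → ℂ),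
      w.re - ∑ j, σ j * (B j).re = (w - ∑ j, (σ j:ℂ) * B j).re := by
    intro w B
    rw [Complex.sub_re, Complex.re_sum]
    congr 1
    exact Finset.sum_congr rfl fun j _ => (Complex.re_ofReal_mul _ _).symm
  constructor
  · intro x t
    have hφx : HasDerivAt (fun x' => φ x' t) (pdxS φ x t) x := by
      have h : ContDiff ℝ (⊤ : ℕ∞) (fun x' : ℝ => φ x' t) := hφ.comp (contDiff_id.prodMk contDiff_const)
      simpa [pdxS] using (h.differentiable (by simp) x).hasDerivAt
    have hψx : ∀ j, HasDerivAt (fun x' => ψ x' t j) (pdxV ψ x t j) x := by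
      intro j
      have h : ContDiff ℝ (⊤ : ℕ∞) (fun x' : ℝ => ψ x' t j) :=
        (hψ j).comp (contDiff_id.prodMk contDiff_const)
      simpa [pdxV] using (h.differentiable (by simp) x).hasDerivAt
    have h1 := hasDerivAt_normSq_comp hφx
    have hsum := HasDerivAt.fun_sum (u := Finset.univ)
      (fun j _ => ((hasDerivAt_normSq_comp (hψx j)).const_mul (σ j)))
    have hG := h1.fun_sub hsum
    rw [hG.deriv, hlx x t]
    simp only [hlψx x t]
    rw [hre, vlax_alg_x σ hσ2 μ (φ x t) (q x t) (ψ x t), Complex.zero_re]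
  · intro x t
    have hφt : HasDerivAt (fun t' => φ x t') (pdtS φ x t) t := by
      have h : ContDiff ℝ (⊤ : ℕ∞) (fun t' : ℝ => φ x t') := hφ.comp (contDiff_const.prodMk contDiff_id)
      simpa [pdtS] using (h.differentiable (by simp) t).hasDerivAt
    have hψt : ∀ j, HasDerivAt (fun t' => ψ x t' j) (pdtV ψ x t j) t := by
      intro j
      have h : ContDiff ℝ (⊤ : ℕ∞) (fun t' : ℝ => ψ x t' j) :=
        (hψ j).comp (contDiff_const.prodMk contDiff_id)
      simpa [pdtV] using (h.differentiable (by simp) t).hasDerivAt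
    have h1 := hasDerivAt_normSq_comp hφt
    have hsum := HasDerivAt.fun_sum (u := Finset.univ)
      (fun j _ => ((hasDerivAt_normSq_comp (hψt j)).const_mul (σ j)))
    have hG := h1.fun_sub hsum
    rw [hG.deriv, hlt x t]
    simp only [hlψt x t]
    rw [hre, vlax_alg_t σ hσ2 μ (φ x t) (q x t) (pdxV q x t) (ψ x t), Complex.zero_re]
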